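/- Let n ≥ 4, let a₁, …, a_{n−2} and b be complex numbers with |aⱼ| < 1 for all j and |b| < 1. Let M be the n×n Hermitian matrix with all diagonal entries 2, entries M_{j,j+1} = aⱼ and M_{j+1,j} = conj(aⱼ) for j = 1, …, n−2, entries M_{n−2,n} = b and M_{n,n−2} = conj(b), and all other entries 0. Then M is positive definite. -/

import Mathlib

open Matrix
open scoped ComplexOrder

/-- `Dmat n a b` is the `n × n` Hermitian matrix with diagonal entries `2`, path
entries `a 0, …, a (n-3)` on the superdiagonal positions `(i, i+1)` for `i < n-2`,
branch entry `b` at position `(n-3, n-1)` (0-indexed, i.e. `(n-2, n)` 1-indexed),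
conjugates below the diagonal, and zeros elsewhere: the off-diagonal support is the
Dynkin diagram of type `Dₙ`. -/
def Dmat (n : ℕ) (a : ℕ → ℂ) (b : ℂ) : Matrix (Fin n) (Fin n) ℂ :=
  fun i j =>
    if i = j then 2
    else if (j : ℕ) = (i : ℕ) + 1 ∧ (i : ℕ) < n - 2 then a i
    else if (i : ℕ) = (j : ℕ) + 1 ∧ (j : ℕ) < n - 2 then (starRingEnd ℂ) (a j)
    else if (i : ℕ) = n - 3 ∧ (j : ℕ) = n - 1 then b
    else if (i : ℕ) = n - 1 ∧ (j : ℕ) = n - 3 then (starRingEnd ℂ) b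
    else 0


section Aux
open Complex Finset


lemma core_ineq (w w' α s t : ℝ) (hw : 0 < w) (hw' : 0 < w') (hww : 1 ≤ w * w')
    (hα1 : α < 1) (hs : 0 ≤ s) (ht : 0 ≤ t) (hst : 0 < s ∨ 0 < t) :
    0 < w * s^2 + w' * t^2 - 2 * α * s * t := by
  rcases eq_or_lt_of_le hs with h | h
  · rcases hst with h' | h'
    · exact absurd h' (by rw [← h]; exact lt_irrefl 0)
    · subst h; nlinarith [mul_pos hw' (mul_pos h' h')]
  · rcases eq_or_lt_of_le ht with h2 | h2
    · subst h2; nlinarith [mul_pos hw (mul_pos h h)]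
    · nlinarith [sq_nonneg (w*s - t), mul_pos (mul_pos hw h) h2,
        mul_le_mul_of_nonneg_right hww (sq_nonneg t), mul_pos h h2]

lemma block_pos (w w' : ℝ) (hw : 0 < w) (hw' : 0 < w') (hww : 1 ≤ w * w')
    (c u v : ℂ) (hc : ‖c‖ < 1) (huv : u ≠ 0 ∨ v ≠ 0) :
    0 < (w : ℂ) * ((starRingEnd ℂ) u * u) + (w' : ℂ) * ((starRingEnd ℂ) v * v)
      + c * ((starRingEnd ℂ) u * v) + (starRingEnd ℂ) c * ((starRingEnd ℂ) v * u) := by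
  set z : ℂ := c * ((starRingEnd ℂ) u * v) with hz
  have hconj : (starRingEnd ℂ) c * ((starRingEnd ℂ) v * u) = (starRingEnd ℂ) z := by
    simp [hz, _root_.map_mul, mul_comm]
  have hu : (starRingEnd ℂ) u * u = ((‖u‖ ^ 2 : ℝ) : ℂ) := by
    rw [Complex.conj_mul']; norm_cast
  have hv : (starRingEnd ℂ) v * v = ((‖v‖ ^ 2 : ℝ) : ℂ) := by
    rw [Complex.conj_mul']; norm_cast
  rw [hconj, hu, hv]
  have hre : (w : ℂ) * ((‖u‖ ^ 2 : ℝ) : ℂ) + (w' : ℂ) * ((‖v‖ ^ 2 : ℝ) : ℂ)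
      + z + (starRingEnd ℂ) z
      = ((w * ‖u‖ ^ 2 + w' * ‖v‖ ^ 2 + 2 * z.re : ℝ) : ℂ) := by
    rw [show (w : ℂ) * ((‖u‖ ^ 2 : ℝ) : ℂ) + (w' : ℂ) * ((‖v‖ ^ 2 : ℝ) : ℂ)
      + z + (starRingEnd ℂ) z = ((w : ℂ) * ((‖u‖ ^ 2 : ℝ) : ℂ)
      + (w' : ℂ) * ((‖v‖ ^ 2 : ℝ) : ℂ)) + (z + (starRingEnd ℂ) z) from by ring,
      Complex.add_conj]
    push_cast
    ring
  rw [show (w : ℂ) * ((‖u‖ ^ 2 : ℝ) : ℂ) + (w' : ℂ) * ((‖v‖ ^ 2 : ℝ) : ℂ)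
      + z + (starRingEnd ℂ) z = _ from hre]
  have hzre : -(‖c‖ * ‖u‖ * ‖v‖) ≤ z.re := by
    have h1 : |z.re| ≤ ‖z‖ := Complex.abs_re_le_norm z
    have h2 : ‖z‖ = ‖c‖ * ‖u‖ * ‖v‖ := by
      simp only [hz, norm_mul, Complex.norm_conj]; ring
    have := neg_abs_le z.re
    rw [h2] at h1
    cases' abs_le.mp (le_of_eq rfl : |z.re| ≤ |z.re|) with _ _
    linarith [neg_abs_le z.re, abs_le.mp h1]
  have key : 0 < w * ‖u‖ ^ 2 + w' * ‖v‖ ^ 2 + 2 * z.re := by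
    have habs : 0 < ‖u‖ ∨ 0 < ‖v‖ := by
      rcases huv with h | h
      · exact Or.inl (by simpa using norm_pos_iff.mpr h)
      · exact Or.inr (by simpa using norm_pos_iff.mpr h)
    have := core_ineq w w' (‖c‖) (‖u‖) (‖v‖) hw hw' hww hc
      (norm_nonneg u) (norm_nonneg v) habs
    linarith
  exact_mod_cast key


lemma block_nonneg (w w' : ℝ) (hw : 0 < w) (hw' : 0 < w') (hww : 1 ≤ w * w')
    (c u v : ℂ) (hc : ‖c‖ < 1) :
    0 ≤ (w : ℂ) * ((starRingEnd ℂ) u * u) + (w' : ℂ) * ((starRingEnd ℂ) v * v)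
      + c * ((starRingEnd ℂ) u * v) + (starRingEnd ℂ) c * ((starRingEnd ℂ) v * u) := by
  by_cases hu : u = 0
  · by_cases hv : v = 0
    · simp [hu, hv]
    · exact le_of_lt (block_pos w w' hw hw' hww c u v hc (Or.inr hv))
  · exact le_of_lt (block_pos w w' hw hw' hww c u v hc (Or.inl hu))

end Aux

section Aux2
open Finset

private noncomputable abbrev C' : ℂ →+* ℂ := starRingEnd ℂ

lemma sum_range_restrict {A : Type*} [AddCommMonoid A] (f : ℕ → A) (p q : ℕ) (h : p ≤ q) :
    ∑ i ∈ Finset.range q, (if i < p then f i else 0) = ∑ i ∈ Finset.range p, f i := by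
  rw [← Finset.sum_subset (Finset.range_subset_range.mpr h)
      (fun x _ hx => if_neg (fun hlt => hx (Finset.mem_range.mpr hlt)))]
  exact Finset.sum_congr rfl fun i hi => if_pos (Finset.mem_range.mp hi)

lemma key_identity (m : ℕ) (a : ℕ → ℂ) (b : ℂ) (x : Fin (m+4) → ℂ) (y : ℕ → ℂ)
    (hy : ∀ i : Fin (m+4), x i = y (i : ℕ)) :
    star x ⬝ᵥ (Dmat (m+4) a b) *ᵥ x
      = C' (y 0) * y 0
        + ∑ k ∈ Finset.range (m+2),
            ((if k = m+1 then (1/2 : ℂ) else 1) * (C' (y k) * y k)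
              + (if k = m+1 then (2 : ℂ) else 1) * (C' (y (k+1)) * y (k+1))
              + a k * (C' (y k) * y (k+1)) + C' (a k) * (C' (y (k+1)) * y k))
        + ((1/2 : ℂ) * (C' (y (m+1)) * y (m+1)) + 2 * (C' (y (m+3)) * y (m+3))
            + b * (C' (y (m+1)) * y (m+3)) + C' b * (C' (y (m+3)) * y (m+1))) := by
  -- nat-indexed entries
  set M : ℕ → ℕ → ℂ := fun i j =>
    if i = j then 2
    else if j = i + 1 ∧ i < m+2 then a i
    else if i = j + 1 ∧ j < m+2 then C' (a j)
    else if i = m+1 ∧ j = m+3 then b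
    else if i = m+3 ∧ j = m+1 then C' b
    else 0 with hMdef
  set d : ℕ → ℂ := fun k => C' (y k) * y k with hd
  -- Step 1: LHS as a double sum over ℕ
  have step1 : star x ⬝ᵥ (Dmat (m+4) a b) *ᵥ x
      = ∑ i ∈ range (m+4), ∑ j ∈ range (m+4), C' (y i) * (M i j * y j) := by
    rw [dotProduct, ← Fin.sum_univ_eq_sum_range
      (fun i => ∑ j ∈ range (m+4), C' (y i) * (M i j * y j)) (m+4)]
    apply Finset.sum_congr rfl
    intro i _
    rw [Matrix.mulVec, dotProduct, ← Fin.sum_univ_eq_sum_range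
      (fun j => C' (y (i:ℕ)) * (M (i:ℕ) j * y j)) (m+4)]
    rw [Pi.star_apply, hy i, Complex.star_def, Finset.mul_sum]
    apply Finset.sum_congr rfl
    intro j _
    rw [hy j]
    congr 2
    simp only [Dmat, hMdef, Fin.ext_iff, show (m+4)-2 = m+2 from rfl,
      show (m+4)-3 = m+1 from rfl, show (m+4)-1 = m+3 from rfl]
  -- Step 2: pointwise decomposition of the summand
  have split : ∀ i j : ℕ, C' (y i) * (M i j * y j)
      = (if i = j then 2 * (C' (y i) * y j) else 0)
      + (if j = i+1 ∧ i < m+2 then a i * (C' (y i) * y j) else 0)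
      + (if i = j+1 ∧ j < m+2 then C' (a j) * (C' (y i) * y j) else 0)
      + (if j = m+3 ∧ i = m+1 then b * (C' (y i) * y j) else 0)
      + (if j = m+1 ∧ i = m+3 then C' b * (C' (y i) * y j) else 0) := by
    intro i j
    simp only [hMdef]
    split_ifs <;> first | (exfalso; omega) | ring1
  have A1 : ∑ i ∈ range (m+4), ∑ j ∈ range (m+4),
      (if i = j then 2 * (C' (y i) * y j) else 0) = ∑ i ∈ range (m+4), 2 * d i := by
    refine Finset.sum_congr rfl fun i hi => ?_
    rw [Finset.sum_ite_eq (range (m+4)) i (fun j => 2 * (C' (y i) * y j)), if_pos hi]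
  have A2 : ∑ i ∈ range (m+4), ∑ j ∈ range (m+4),
      (if j = i+1 ∧ i < m+2 then a i * (C' (y i) * y j) else 0)
      = ∑ k ∈ range (m+2), a k * (C' (y k) * y (k+1)) := by
    rw [← sum_range_restrict (fun k => a k * (C' (y k) * y (k+1))) (m+2) (m+4) (by omega)]
    refine Finset.sum_congr rfl fun i hi => ?_
    simp only [ite_and]
    rw [Finset.sum_ite_eq' (range (m+4)) (i+1)
      (fun j => if i < m+2 then a i * (C' (y i) * y j) else 0)]
    have hi4 := Finset.mem_range.mp hi
    simp only [Finset.mem_range]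
    split_ifs with h1 h2 h3 <;> first | rfl | omega
  have A3 : ∑ i ∈ range (m+4), ∑ j ∈ range (m+4),
      (if i = j+1 ∧ j < m+2 then C' (a j) * (C' (y i) * y j) else 0)
      = ∑ k ∈ range (m+2), C' (a k) * (C' (y (k+1)) * y k) := by
    rw [Finset.sum_comm,
      ← sum_range_restrict (fun k => C' (a k) * (C' (y (k+1)) * y k)) (m+2) (m+4) (by omega)]
    refine Finset.sum_congr rfl fun j hj => ?_
    simp only [ite_and]
    rw [Finset.sum_ite_eq' (range (m+4)) (j+1)
      (fun i => if j < m+2 then C' (a j) * (C' (y i) * y j) else 0)]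
    have hj4 := Finset.mem_range.mp hj
    simp only [Finset.mem_range]
    split_ifs with h1 h2 h3 <;> first | rfl | omega
  have A4 : ∑ i ∈ range (m+4), ∑ j ∈ range (m+4),
      (if j = m+3 ∧ i = m+1 then b * (C' (y i) * y j) else 0)
      = b * (C' (y (m+1)) * y (m+3)) := by
    have e : ∀ i ∈ range (m+4), (∑ j ∈ range (m+4),
        if j = m+3 ∧ i = m+1 then b * (C' (y i) * y j) else 0)
        = (if i = m+1 then b * (C' (y i) * y (m+3)) else 0) := by
      intro i _
      simp only [ite_and]
      rw [Finset.sum_ite_eq' (range (m+4)) (m+3)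
        (fun j => if i = m+1 then b * (C' (y i) * y j) else 0),
        if_pos (Finset.mem_range.mpr (by omega))]
    rw [Finset.sum_congr rfl e, Finset.sum_ite_eq' (range (m+4)) (m+1)
      (fun i => b * (C' (y i) * y (m+3))), if_pos (Finset.mem_range.mpr (by omega))]
  have A5 : ∑ i ∈ range (m+4), ∑ j ∈ range (m+4),
      (if j = m+1 ∧ i = m+3 then C' b * (C' (y i) * y j) else 0)
      = C' b * (C' (y (m+3)) * y (m+1)) := by
    have e : ∀ i ∈ range (m+4), (∑ j ∈ range (m+4),
        if j = m+1 ∧ i = m+3 then C' b * (C' (y i) * y j) else 0)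
        = (if i = m+3 then C' b * (C' (y i) * y (m+1)) else 0) := by
      intro i _
      simp only [ite_and]
      rw [Finset.sum_ite_eq' (range (m+4)) (m+1)
        (fun j => if i = m+3 then C' b * (C' (y i) * y j) else 0),
        if_pos (Finset.mem_range.mpr (by omega))]
    rw [Finset.sum_congr rfl e, Finset.sum_ite_eq' (range (m+4)) (m+3)
      (fun i => C' b * (C' (y i) * y (m+1))), if_pos (Finset.mem_range.mpr (by omega))]
  have step2 : star x ⬝ᵥ (Dmat (m+4) a b) *ᵥ x
      = (∑ i ∈ range (m+4), 2 * d i)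
      + (∑ k ∈ range (m+2), a k * (C' (y k) * y (k+1)))
      + (∑ k ∈ range (m+2), C' (a k) * (C' (y (k+1)) * y k))
      + b * (C' (y (m+1)) * y (m+3))
      + C' b * (C' (y (m+3)) * y (m+1)) := by
    rw [step1, Finset.sum_congr rfl (fun i _ => Finset.sum_congr rfl (fun j _ => split i j))]
    simp only [Finset.sum_add_distrib]
    rw [A1, A2, A3, A4, A5]
  -- Step 3: diagonal bookkeeping
  have hW : ∑ k ∈ range (m+2), (if k = m+1 then (1/2:ℂ) else 1) * d k
      = ∑ k ∈ range (m+2), d k + (-(1/2:ℂ)) * d (m+1) := by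
    have e : ∀ k ∈ range (m+2), (if k = m+1 then (1/2:ℂ) else 1) * d k
        = d k + (if k = m+1 then (-(1/2:ℂ)) * d k else 0) := by
      intro k _; split_ifs <;> ring
    rw [Finset.sum_congr rfl e, Finset.sum_add_distrib,
      Finset.sum_ite_eq' (range (m+2)) (m+1) (fun k => (-(1/2:ℂ)) * d k),
      if_pos (Finset.mem_range.mpr (by omega))]
  have hW' : ∑ k ∈ range (m+2), (if k = m+1 then (2:ℂ) else 1) * d (k+1)
      = ∑ k ∈ range (m+2), d (k+1) + d (m+2) := by
    have e : ∀ k ∈ range (m+2), (if k = m+1 then (2:ℂ) else 1) * d (k+1)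
        = d (k+1) + (if k = m+1 then d (k+1) else 0) := by
      intro k _; split_ifs <;> ring
    rw [Finset.sum_congr rfl e, Finset.sum_add_distrib,
      Finset.sum_ite_eq' (range (m+2)) (m+1) (fun k => d (k+1)),
      if_pos (Finset.mem_range.mpr (by omega))]
  have hshift : ∑ k ∈ range (m+2), d (k+1) = ∑ k ∈ range (m+2), d k + d (m+2) - d 0 := by
    linear_combination (Finset.sum_range_succ d (m+2)) - (Finset.sum_range_succ' d (m+2))
  have hpeel : ∑ i ∈ range (m+4), 2 * d i
      = 2 * (∑ k ∈ range (m+2), d k) + 2 * d (m+2) + 2 * d (m+3) := by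
    rw [show m+4 = (m+3)+1 from rfl, Finset.sum_range_succ,
      show m+3 = (m+2)+1 from rfl, Finset.sum_range_succ, Finset.mul_sum]
  rw [step2]
  simp only [Finset.sum_add_distrib]
  rw [hW, hW', hshift, hpeel]
  ring


lemma Dmat_herm (m : ℕ) (a : ℕ → ℂ) (b : ℂ) : (Dmat (m+4) a b).IsHermitian := by
  ext i j
  have hi := i.isLt
  have hj := j.isLt
  simp only [Dmat, Matrix.conjTranspose_apply, Fin.ext_iff, show (m+4)-2 = m+2 from rfl,
    show (m+4)-3 = m+1 from rfl, show (m+4)-1 = m+3 from rfl, apply_ite (star : ℂ → ℂ)]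
  split_ifs <;>
    first
      | rfl
      | (exfalso; omega)
      | simp [Complex.star_def]
      | (simp only [Complex.star_def, Complex.conj_conj]; congr 1; omega)

end Aux2

/-- `Dₙ` case of Lemma 5.3: if all the entries `a j` (`j < n-2`)
and the branch entry `b` have modulus `< 1`, the `Dₙ`-shaped Hermitian matrix with
diagonal `2` is positive definite. -/
theorem Dmat_posDef
    (n : ℕ) (hn : 4 ≤ n) (a : ℕ → ℂ) (b : ℂ)
    (ha : ∀ j : ℕ, j < n - 2 → ‖a j‖ < 1)
    (hb : ‖b‖ < 1) :
    (Dmat n a b).PosDef := by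
  obtain ⟨m, rfl⟩ : ∃ m, n = m + 4 := ⟨n - 4, by omega⟩
  rw [Matrix.posDef_iff_dotProduct_mulVec]
  constructor
  · exact Dmat_herm m a b
  · intro x hx
    set y : ℕ → ℂ := fun k => if h : k < m+4 then x ⟨k, h⟩ else 0 with hydef
    have hy : ∀ i : Fin (m+4), x i = y (i : ℕ) := by
      intro i; simp [hydef, i.isLt]
    rw [key_identity m a b x y hy]
    have ha' : ∀ k, k < m+2 → ‖a k‖ < 1 := fun k hk => ha k (by omega)
    -- nonnegativity of each block
    have hblock : ∀ k ∈ Finset.range (m+2),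
        (0:ℂ) ≤ (if k = m+1 then (1/2 : ℂ) else 1) * (C' (y k) * y k)
          + (if k = m+1 then (2 : ℂ) else 1) * (C' (y (k+1)) * y (k+1))
          + a k * (C' (y k) * y (k+1)) + C' (a k) * (C' (y (k+1)) * y k) := by
      intro k hk
      by_cases hkm : k = m+1
      · simp only [if_pos hkm]
        have h := block_nonneg (1/2) 2 (by norm_num) (by norm_num) (by norm_num)
          (a k) (y k) (y (k+1)) (ha' k (Finset.mem_range.mp hk))
        push_cast at h
        convert h using 3 <;> norm_num
      · simp only [if_neg hkm]
        have h := block_nonneg 1 1 one_pos one_pos (by norm_num)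
          (a k) (y k) (y (k+1)) (ha' k (Finset.mem_range.mp hk))
        push_cast at h
        convert h using 3 <;> norm_num
    have hd0 : (0:ℂ) ≤ C' (y 0) * y 0 := by
      rw [Complex.conj_mul']; exact_mod_cast sq_nonneg ‖y 0‖
    have hr : (0:ℂ) ≤ (1/2 : ℂ) * (C' (y (m+1)) * y (m+1)) + 2 * (C' (y (m+3)) * y (m+3))
        + b * (C' (y (m+1)) * y (m+3)) + C' b * (C' (y (m+3)) * y (m+1)) := by
      have h := block_nonneg (1/2) 2 (by norm_num) (by norm_num) (by norm_num)
        b (y (m+1)) (y (m+3)) hb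
      push_cast at h
      convert h using 3 <;> norm_num
    -- find a nonzero coordinate
    obtain ⟨i, hxi⟩ : ∃ i, x i ≠ 0 := by
      by_contra h; push_neg at h; exact hx (funext h)
    have hyi : y (i : ℕ) ≠ 0 := by rw [← hy i]; exact hxi
    have hik := i.isLt
    -- strict positivity of one block
    by_cases hcase : (i : ℕ) < m + 3
    · -- a path block is strictly positive
      have hsum : (0:ℂ) < ∑ k ∈ Finset.range (m+2),
          ((if k = m+1 then (1/2 : ℂ) else 1) * (C' (y k) * y k)
            + (if k = m+1 then (2 : ℂ) else 1) * (C' (y (k+1)) * y (k+1))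
            + a k * (C' (y k) * y (k+1)) + C' (a k) * (C' (y (k+1)) * y k)) := by
        refine Finset.sum_pos' hblock ?_
        by_cases hlt : (i : ℕ) < m + 2
        · refine ⟨(i : ℕ), Finset.mem_range.mpr hlt, ?_⟩
          by_cases hkm : (i : ℕ) = m+1
          · simp only [if_pos hkm]
            have h := block_pos (1/2) 2 (by norm_num) (by norm_num) (by norm_num)
              (a (i:ℕ)) (y (i:ℕ)) (y ((i:ℕ)+1)) (ha' _ hlt) (Or.inl hyi)
            push_cast at h
            convert h using 3 <;> norm_num
          · simp only [if_neg hkm]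
            have h := block_pos 1 1 one_pos one_pos (by norm_num)
              (a (i:ℕ)) (y (i:ℕ)) (y ((i:ℕ)+1)) (ha' _ hlt) (Or.inl hyi)
            push_cast at h
            convert h using 3 <;> norm_num
        · -- (i : ℕ) = m+2 : use block m+1
          have him : (i : ℕ) = m + 2 := by omega
          refine ⟨m+1, Finset.mem_range.mpr (by omega), ?_⟩
          simp only [if_pos rfl]
          have hyv : y (m+1+1) ≠ 0 := by rw [show m+1+1 = m+2 from rfl, ← him]; exact hyi
          have h := block_pos (1/2) 2 (by norm_num) (by norm_num) (by norm_num)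
            (a (m+1)) (y (m+1)) (y (m+1+1)) (ha' _ (by omega)) (Or.inr hyv)
          push_cast at h
          convert h using 3 <;> norm_num
      have h1 := add_pos_of_nonneg_of_pos hd0 hsum
      exact add_pos_of_pos_of_nonneg h1 hr
    · -- (i : ℕ) = m+3 : the branch block is strictly positive
      have him : (i : ℕ) = m + 3 := by omega
      have hyv : y (m+3) ≠ 0 := by rw [← him]; exact hyi
      have hrpos : (0:ℂ) < (1/2 : ℂ) * (C' (y (m+1)) * y (m+1)) + 2 * (C' (y (m+3)) * y (m+3))
          + b * (C' (y (m+1)) * y (m+3)) + C' b * (C' (y (m+3)) * y (m+1)) := by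
        have h := block_pos (1/2) 2 (by norm_num) (by norm_num) (by norm_num)
          b (y (m+1)) (y (m+3)) hb (Or.inr hyv)
        push_cast at h
        convert h using 3 <;> norm_num
      have hsum : (0:ℂ) ≤ ∑ k ∈ Finset.range (m+2),
          ((if k = m+1 then (1/2 : ℂ) else 1) * (C' (y k) * y k)
            + (if k = m+1 then (2 : ℂ) else 1) * (C' (y (k+1)) * y (k+1))
            + a k * (C' (y k) * y (k+1)) + C' (a k) * (C' (y (k+1)) * y k)) :=
        Finset.sum_nonneg hblock
      exact add_pos_of_nonneg_of_pos (add_nonneg hd0 hsum) hrpos
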